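/- arXiv:1611.09225 — 2 statements merged into one kernel-verified Lean document; each statement's English description precedes it below -/
import Mathlib

section
/- Let ψ be an Archimedean generator with -log ψ subadditive and ψ(0)=1. Then for all u₁, u₂ ∈ [0,1], ψ(ψ⁻¹(u₁) + ψ⁻¹(u₂)) ≥ u₁·u₂, i.e., the bivariate Archimedean copula C_ψ dominates the independence copula pointwise. -/
open scoped ENNReal

/-- If the Archimedean generator `ψ : [0,∞] → [0,1]` (with `ψ 0 = 1`, `ψ ∞ = 0`,
strictly decreasing where positive) has subadditive `-log ∘ ψ`, then the
bivariate Archimedean copula `C_ψ(u₁,u₂) = ψ (ψ⁻(u₁) + ψ⁻(u₂))` dominates the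
independence copula pointwise. -/
theorem archimedean_copula_dominates_independence
    (ψ : ℝ≥0∞ → ℝ)
    (hcont : Continuous ψ)
    (h0 : ψ 0 = 1) (htop : ψ ⊤ = 0)
    (hrange : ∀ t, ψ t ∈ Set.Icc (0 : ℝ) 1)
    (hanti : StrictAntiOn ψ (Set.Iic (sInf {t : ℝ≥0∞ | ψ t = 0})))
    (hsub : ∀ s t : ℝ≥0∞, -Real.log (ψ (s + t)) ≤ (-Real.log (ψ s)) + (-Real.log (ψ t)))
    (psiInv : ℝ → ℝ≥0∞)
    (hpsiInv : ∀ s : ℝ, psiInv s = sInf {t : ℝ≥0∞ | ψ t = s}) :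
    ∀ u₁ u₂ : ℝ, u₁ ∈ Set.Icc (0 : ℝ) 1 → u₂ ∈ Set.Icc (0 : ℝ) 1 →
      u₁ * u₂ ≤ ψ (psiInv u₁ + psiInv u₂) := by
  intro u₁ u₂ hu₁ hu₂
  set t₀ := sInf {t : ℝ≥0∞ | ψ t = 0} with ht₀def
  have hclosed : ∀ s : ℝ, IsClosed {t : ℝ≥0∞ | ψ t = s} := fun s =>
    isClosed_eq hcont continuous_const
  have ht₀mem : ψ t₀ = 0 := by
    have : sInf {t : ℝ≥0∞ | ψ t = 0} ∈ {t : ℝ≥0∞ | ψ t = 0} :=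
      IsClosed.sInf_mem ⟨⊤, htop⟩ (hclosed 0)
    exact this
  have hmem : ∀ u ∈ Set.Icc (0:ℝ) 1, ψ (psiInv u) = u ∧ psiInv u ≤ t₀ := by
    intro u hu
    have hsub0 : Set.Icc (ψ t₀) (ψ 0) ⊆ ψ '' Set.Icc 0 t₀ :=
      intermediate_value_Icc' (zero_le : (0 : ℝ≥0∞) ≤ t₀) hcont.continuousOn
    obtain ⟨c, hc, hcψ⟩ := hsub0 (by rw [ht₀mem, h0]; exact hu)
    have hne : ψ (psiInv u) = u := by
      rw [hpsiInv]
      have : sInf {t : ℝ≥0∞ | ψ t = u} ∈ {t : ℝ≥0∞ | ψ t = u} :=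
        IsClosed.sInf_mem ⟨c, hcψ⟩ (hclosed u)
      exact this
    refine ⟨hne, ?_⟩
    rw [hpsiInv]; exact le_trans (sInf_le hcψ) hc.2
  obtain ⟨ha, hat⟩ := hmem u₁ hu₁
  obtain ⟨hb, hbt⟩ := hmem u₂ hu₂
  set a := psiInv u₁ with hadef
  set b := psiInv u₂ with hbdef
  rcases eq_or_lt_of_le hu₁.1 with h1 | h1
  · rw [← h1, zero_mul]; exact (hrange _).1
  rcases eq_or_lt_of_le hu₂.1 with h2 | h2
  · rw [← h2, mul_zero]; exact (hrange _).1
  by_cases hz : ψ (a + b) = 0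
  · exfalso
    have ha0 : a ≠ 0 := by
      intro h
      rw [h, zero_add] at hz
      rw [hz] at hb; linarith
    have ha_lt : a < t₀ := lt_of_le_of_ne hat (by
      intro h; rw [h, ht₀mem] at ha; linarith)
    have hb_lt : b < t₀ := lt_of_le_of_ne hbt (by
      intro h; rw [h, ht₀mem] at hb; linarith)
    have ht₀top : t₀ ≠ ⊤ := by
      intro h
      have : a + b < ⊤ := ENNReal.add_lt_top.mpr ⟨ha_lt.trans_le le_top, hb_lt.trans_le le_top⟩
      -- need a + b ≥ t₀
      have hge : t₀ ≤ a + b := by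
        by_contra hlt
        push_neg at hlt
        have := hanti (Set.mem_Iic.mpr hlt.le) (Set.mem_Iic.mpr le_rfl) hlt
        rw [ht₀mem, hz] at this; exact lt_irrefl _ this
      rw [h] at hge
      exact absurd (top_le_iff.mp hge) this.ne
    have hge : t₀ ≤ a + b := by
      by_contra hlt
      push_neg at hlt
      have := hanti (Set.mem_Iic.mpr hlt.le) (Set.mem_Iic.mpr le_rfl) hlt
      rw [ht₀mem, hz] at this; exact lt_irrefl _ this
    set d := t₀ - a with hddef
    have hd_lt : d < t₀ := ENNReal.sub_lt_self ht₀top (pos_of_gt ha_lt).ne' ha0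
    have hεpos : 0 < ψ d := by
      have := hanti (Set.mem_Iic.mpr hd_lt.le) (Set.mem_Iic.mpr le_rfl) hd_lt
      rwa [ht₀mem] at this
    -- key estimate on Ico a t₀
    have hkey : ∀ t ∈ Set.Ico a t₀, u₁ * ψ d ≤ ψ t := by
      intro t ht
      have hta : a + (t - a) = t := add_tsub_cancel_of_le ht.1
      have hψt_pos : 0 < ψ t := by
        have := hanti (Set.mem_Iic.mpr ht.2.le) (Set.mem_Iic.mpr le_rfl) ht.2
        rwa [ht₀mem] at this
      have hle : t - a ≤ d := tsub_le_tsub_right ht.2.le a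
      have hψta_pos : 0 < ψ (t - a) := lt_of_lt_of_le hεpos
        (hanti.antitoneOn (Set.mem_Iic.mpr (hle.trans hd_lt.le))
          (Set.mem_Iic.mpr hd_lt.le) hle)
      have hψd_le : ψ d ≤ ψ (t - a) :=
        hanti.antitoneOn (Set.mem_Iic.mpr (hle.trans hd_lt.le))
          (Set.mem_Iic.mpr hd_lt.le) hle
      have hs := hsub a (t - a)
      rw [hta, ha] at hs
      have hlog : Real.log (u₁ * ψ (t - a)) ≤ Real.log (ψ t) := by
        rw [Real.log_mul h1.ne' hψta_pos.ne']
        linarith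
      have : u₁ * ψ (t - a) ≤ ψ t :=
        (Real.log_le_log_iff (by positivity) hψt_pos).mp hlog
      nlinarith
    -- closed superset argument
    have hSclosed : IsClosed {t : ℝ≥0∞ | u₁ * ψ d ≤ ψ t} :=
      isClosed_le continuous_const hcont
    have hsubset : Set.Icc a t₀ ⊆ {t : ℝ≥0∞ | u₁ * ψ d ≤ ψ t} := by
      rw [← closure_Ico ha_lt.ne]
      exact hSclosed.closure_subset_iff.mpr hkey
    have := hsubset (Set.mem_Icc.mpr ⟨ha_lt.le, le_rfl⟩)
    rw [Set.mem_setOf_eq, ht₀mem] at this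
    nlinarith
  · have hψpos : 0 < ψ (a + b) := lt_of_le_of_ne (hrange _).1 (Ne.symm hz)
    have hs := hsub a b
    rw [ha, hb] at hs
    have hlog : Real.log (u₁ * u₂) ≤ Real.log (ψ (a + b)) := by
      rw [Real.log_mul h1.ne' h2.ne']
      linarith
    exact (Real.log_le_log_iff (by positivity) hψpos).mp hlog
end

section
/- For the Ali-Mikhail-Haq generator ψ_θ(t) = (1-θ)/(e^t - θ) with θ ∈ [0,1), the Kendall's tau τ(θ) = 1 - 2(θ + (1-θ)²·log(1-θ))/(3θ²) (where τ(0)=0 by continuity) satisfies τ(θ) ∈ [0, 1/3) for all θ ∈ [0,1), and τ is strictly increasing on [0,1). -/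
/-- Kendall's tau of the Ali-Mikhail-Haq family. -/
noncomputable def tauAMH (θ : ℝ) : ℝ :=
  if θ = 0 then 0 else 1 - 2 * (θ + (1 - θ) ^ 2 * Real.log (1 - θ)) / (3 * θ ^ 2)

/-- `(1-θ) log(1-θ) > -θ` for `θ ∈ (0,1)`. -/
lemma tauAMH_logA {θ : ℝ} (h0 : 0 < θ) (h1 : θ < 1) :
    -θ < (1 - θ) * Real.log (1 - θ) := by
  have ht : 0 < 1 - θ := by linarith
  have hlt : Real.log (1 - θ)⁻¹ < (1 - θ)⁻¹ - 1 := by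
    apply Real.log_lt_sub_one_of_pos (by positivity)
    intro h
    have : (1 : ℝ) - θ = 1 := by
      field_simp at h
      linarith [h]
    linarith
  rw [Real.log_inv] at hlt
  have h2 : (1 - θ) * (-Real.log (1 - θ)) < (1 - θ) * ((1 - θ)⁻¹ - 1) :=
    mul_lt_mul_of_pos_left hlt ht
  have h3 : (1 - θ) * ((1 - θ)⁻¹ - 1) = θ := by field_simp; ring
  nlinarith [h2]

/-- `(1-θ) log(1-θ) > (θ² - 2θ)/2` for `θ ∈ (0,1)` (a sinh-type inequality). -/
lemma tauAMH_logB {θ : ℝ} (h0 : 0 < θ) (h1 : θ < 1) :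
    (θ ^ 2 - 2 * θ) / 2 < (1 - θ) * Real.log (1 - θ) := by
  have ht : 0 < 1 - θ := by linarith
  set x : ℝ := (1 - θ)⁻¹ with hx
  have hx1 : 1 < x := (one_lt_inv₀ ht).mpr (by linarith)
  have hlog : 0 < Real.log x := Real.log_pos hx1
  have hs : Real.log x < Real.sinh (Real.log x) := Real.self_lt_sinh_iff.mpr hlog
  rw [Real.sinh_log (by positivity)] at hs
  have hxinv : x⁻¹ = 1 - θ := by rw [hx, inv_inv]
  rw [hxinv] at hs
  have hlx : Real.log x = -Real.log (1 - θ) := by rw [hx, Real.log_inv]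
  rw [hlx] at hs
  have h2 : (1 - θ) * (-Real.log (1 - θ)) < (1 - θ) * ((x - (1 - θ)) / 2) :=
    mul_lt_mul_of_pos_left hs ht
  have h3 : (1 - θ) * x = 1 := by rw [hx]; field_simp
  nlinarith [h2]

/-- Auxiliary function whose positivity gives `tauAMH > 0`. -/
noncomputable def uAMH (θ : ℝ) : ℝ := 3 * θ ^ 2 - 2 * θ - 2 * ((1 - θ) ^ 2 * Real.log (1 - θ))

lemma uAMH_hasDeriv {x : ℝ} (h1 : x < 1) :
    HasDerivAt uAMH (4 * x + 4 * ((1 - x) * Real.log (1 - x))) x := by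
  have ht : 0 < 1 - x := by linarith
  have hone : HasDerivAt (fun y : ℝ => 1 - y) (-1) x := by
    simpa using (hasDerivAt_id x).const_sub 1
  have hlog : HasDerivAt (fun y : ℝ => Real.log (1 - y)) ((1 - x)⁻¹ * (-1)) x :=
    (Real.hasDerivAt_log ht.ne').comp x hone
  have hsq : HasDerivAt (fun y : ℝ => (1 - y) ^ 2) (2 * (1 - x) ^ 1 * (-1)) x := hone.pow 2
  have hmul := hsq.mul hlog
  have hpoly : HasDerivAt (fun y : ℝ => 3 * y ^ 2 - 2 * y) (3 * (2 * x) - 2) x := by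
    have := ((hasDerivAt_pow 2 x).const_mul 3).sub ((hasDerivAt_id x).const_mul 2)
    exact this.congr_deriv (by simp)
  have := hpoly.sub (hmul.const_mul 2)
  refine this.congr_deriv ?_
  have h4 : (1 - x) ^ 2 * ((1 - x)⁻¹ * (-1)) = -(1 - x) := by
    field_simp
  rw [h4]
  ring

/-- `2(θ + (1-θ)² log(1-θ)) < 3θ²` for `θ ∈ (0,1)`. -/
lemma tauAMH_posC {θ : ℝ} (h0 : 0 < θ) (h1 : θ < 1) :
    2 * (θ + (1 - θ) ^ 2 * Real.log (1 - θ)) < 3 * θ ^ 2 := by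
  have hmono : StrictMonoOn uAMH (Set.Ico (0 : ℝ) 1) := by
    apply strictMonoOn_of_deriv_pos (convex_Ico 0 1)
    · have hlogc : ContinuousOn (fun y : ℝ => Real.log (1 - y)) (Set.Ico (0:ℝ) 1) :=
        ContinuousOn.log (by fun_prop)
          (fun x hx => by simp only [Set.mem_Ico] at hx; intro h; linarith [hx.2])
      have h2 : ContinuousOn (fun y : ℝ => (1 - y) ^ 2) (Set.Ico (0:ℝ) 1) := by fun_prop
      have h3 : ContinuousOn (fun y : ℝ => 2 * ((1 - y) ^ 2 * Real.log (1 - y)))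
          (Set.Ico (0:ℝ) 1) := continuousOn_const.mul (h2.mul hlogc)
      exact ContinuousOn.sub (by fun_prop) h3
    · intro x hx
      rw [interior_Ico, Set.mem_Ioo] at hx
      rw [(uAMH_hasDeriv hx.2).deriv]
      nlinarith [tauAMH_logA hx.1 hx.2]
  have h := hmono (Set.mem_Ico.mpr ⟨le_refl 0, one_pos⟩)
      (Set.mem_Ico.mpr ⟨h0.le, h1⟩) h0
  have hu0 : uAMH 0 = 0 := by simp [uAMH]
  rw [hu0] at h
  unfold uAMH at h
  nlinarith [h]

/-- The smooth version of `tauAMH` away from `0`. -/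
noncomputable def fAMH (θ : ℝ) : ℝ :=
  1 - 2 * (θ + (1 - θ) ^ 2 * Real.log (1 - θ)) / (3 * θ ^ 2)

lemma fAMH_hasDeriv {x : ℝ} (h0 : 0 < x) (h1 : x < 1) :
    HasDerivAt fAMH
      (-(((2 * (1 + (2 * (1 - x) ^ 1 * (-1) * Real.log (1 - x) +
            (1 - x) ^ 2 * ((1 - x)⁻¹ * (-1))))) * (3 * x ^ 2) -
          2 * (x + (1 - x) ^ 2 * Real.log (1 - x)) * (3 * (2 * x))) / (3 * x ^ 2) ^ 2)) x := by
  have ht : 0 < 1 - x := by linarith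
  have hone : HasDerivAt (fun y : ℝ => 1 - y) (-1) x := by
    simpa using (hasDerivAt_id x).const_sub 1
  have hlog : HasDerivAt (fun y : ℝ => Real.log (1 - y)) ((1 - x)⁻¹ * (-1)) x :=
    (Real.hasDerivAt_log ht.ne').comp x hone
  have hsq : HasDerivAt (fun y : ℝ => (1 - y) ^ 2) (2 * (1 - x) ^ 1 * (-1)) x := hone.pow 2
  have hg : HasDerivAt (fun y : ℝ => 2 * (y + (1 - y) ^ 2 * Real.log (1 - y)))
      (2 * (1 + (2 * (1 - x) ^ 1 * (-1) * Real.log (1 - x) +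
        (1 - x) ^ 2 * ((1 - x)⁻¹ * (-1))))) x :=
    ((hasDerivAt_id x).add (hsq.mul hlog)).const_mul 2
  have hb : HasDerivAt (fun y : ℝ => 3 * y ^ 2) (3 * (2 * x)) x := by
    simpa using (hasDerivAt_pow 2 x).const_mul 3
  have hb0 : (3 : ℝ) * x ^ 2 ≠ 0 := by positivity
  exact (hg.div hb hb0).const_sub 1

lemma fAMH_deriv_pos {x : ℝ} (h0 : 0 < x) (h1 : x < 1) : 0 < deriv fAMH x := by
  rw [(fAMH_hasDeriv h0 h1).deriv]
  have ht : 0 < 1 - x := by linarith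
  have hB := tauAMH_logB h0 h1
  have hinv : (1 - x) ^ 2 * ((1 - x)⁻¹ * (-1)) = -(1 - x) := by field_simp
  rw [hinv]
  rw [neg_pos, div_neg_iff]
  right
  constructor
  · nlinarith [mul_lt_mul_of_pos_left hB (show (0:ℝ) < 12 * x by linarith)]
  · positivity

lemma fAMH_strictMono : StrictMonoOn fAMH (Set.Ioo (0 : ℝ) 1) := by
  apply strictMonoOn_of_deriv_pos (convex_Ioo 0 1)
  · intro x hx
    rw [Set.mem_Ioo] at hx
    exact (fAMH_hasDeriv hx.1 hx.2).differentiableAt.continuousAt.continuousWithinAt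
  · intro x hx
    rw [interior_Ioo, Set.mem_Ioo] at hx
    exact fAMH_deriv_pos hx.1 hx.2

lemma tauAMH_eq_fAMH {θ : ℝ} (h : θ ≠ 0) : tauAMH θ = fAMH θ := by
  simp [tauAMH, fAMH, h]

lemma tauAMH_pos {θ : ℝ} (h0 : 0 < θ) (h1 : θ < 1) : 0 < tauAMH θ := by
  rw [tauAMH_eq_fAMH h0.ne']
  have hden : (0 : ℝ) < 3 * θ ^ 2 := by positivity
  have h := tauAMH_posC h0 h1
  have : 2 * (θ + (1 - θ) ^ 2 * Real.log (1 - θ)) / (3 * θ ^ 2) < 1 :=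
    (div_lt_one hden).mpr h
  unfold fAMH
  linarith

/-- For the Ali-Mikhail-Haq family, Kendall's tau lies in `[0, 1/3)` on `[0,1)` and is
strictly increasing there. -/
theorem tauAMH_range_and_strictMono :
    (∀ θ ∈ Set.Ico (0 : ℝ) 1, tauAMH θ ∈ Set.Ico (0 : ℝ) (1 / 3)) ∧
      StrictMonoOn tauAMH (Set.Ico (0 : ℝ) 1) := by
  constructor
  · intro θ hθ
    rw [Set.mem_Ico] at hθ
    rcases eq_or_lt_of_le hθ.1 with h | h0
    · simp [tauAMH, ← h]
    · refine Set.mem_Ico.mpr ⟨(tauAMH_pos h0 hθ.2).le, ?_⟩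
      rw [tauAMH_eq_fAMH h0.ne']
      have ht : 0 < 1 - θ := by linarith
      have hA := tauAMH_logA h0 hθ.2
      have hA2 : (1 - θ) * (-θ) < (1 - θ) * ((1 - θ) * Real.log (1 - θ)) :=
        mul_lt_mul_of_pos_left hA ht
      have hg : θ ^ 2 < θ + (1 - θ) ^ 2 * Real.log (1 - θ) := by nlinarith [hA2]
      have hden : (0 : ℝ) < 3 * θ ^ 2 := by positivity
      have h23 : (2 : ℝ) / 3 < 2 * (θ + (1 - θ) ^ 2 * Real.log (1 - θ)) / (3 * θ ^ 2) := by
        rw [lt_div_iff₀ hden]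
        nlinarith [hg]
      unfold fAMH
      linarith
  · intro a ha b hb hab
    rw [Set.mem_Ico] at ha hb
    rcases eq_or_lt_of_le ha.1 with h | h0
    · have hb0 : 0 < b := by rw [h]; exact hab
      have : tauAMH a = 0 := by simp [tauAMH, ← h]
      rw [this]
      exact tauAMH_pos hb0 hb.2
    · have hb0 : 0 < b := h0.trans hab
      rw [tauAMH_eq_fAMH h0.ne', tauAMH_eq_fAMH hb0.ne']
      exact fAMH_strictMono (Set.mem_Ioo.mpr ⟨h0, hab.trans hb.2⟩)
        (Set.mem_Ioo.mpr ⟨hb0, hb.2⟩) hab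
end
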